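/- For each d ≥ 2 let X^{(d)} be a Latin hypercube sample of N = d points in [0,1)^d. Then liminf_{d→∞} γ_{D^d_0}(X^{(d)}) / √d ≥ √(2π/e). -/

import Mathlib

open MeasureTheory ProbabilityTheory Filter
open scoped ENNReal Classical

namespace LHSPaper

/-- The anchored box `[0,a) = ∏_i [0, a_i)` in `[0,1)^d`. -/
def anchoredBox {d : ℕ} (a : Fin d → ℝ) : Set (Fin d → ℝ) := {x | ∀ i, x i ∈ Set.Ico 0 (a i)}

/-- `C^d_0`, the collection of anchored boxes `[0,a)` with `a ∈ [0,1]^d`. -/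
def anchoredBoxes (d : ℕ) : Set (Set (Fin d → ℝ)) :=
  {S | ∃ a : Fin d → ℝ, (∀ i, a i ∈ Set.Icc (0 : ℝ) 1) ∧ S = anchoredBox a}

/-- `D^d_0`, the collection of differences `B \ A` of anchored boxes. -/
def boxDiffs (d : ℕ) : Set (Set (Fin d → ℝ)) :=
  {S | ∃ A ∈ anchoredBoxes d, ∃ B ∈ anchoredBoxes d, S = B \ A}

/-- The half-open unit cube `[0,1)^d`. -/
def unitCube (d : ℕ) : Set (Fin d → ℝ) := {x | ∀ i, x i ∈ Set.Ico (0 : ℝ) 1}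

/-- `γ`-negative dependence of the indicators of the events `A 1, …, A N`. -/
def GammaNegDep {Ω : Type*} [MeasurableSpace Ω] (μ : Measure Ω) {N : ℕ}
    (γ : ℝ≥0∞) (A : Fin N → Set Ω) : Prop :=
  ∀ J : Finset (Fin N), J.Nonempty →
    μ (⋂ j ∈ J, A j) ≤ γ * ∏ j ∈ J, μ (A j) ∧
    μ (⋂ j ∈ J, (A j)ᶜ) ≤ γ * ∏ j ∈ J, μ (A j)ᶜ

/-- The `𝒮`-correlation number of a random point tuple `X`. -/
noncomputable def corrNum {Ω : Type*} [MeasurableSpace Ω] (μ : Measure Ω) {N d : ℕ}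
    (𝒮 : Set (Set (Fin d → ℝ))) (X : Fin N → Ω → Fin d → ℝ) : ℝ≥0∞ :=
  ⨆ (S : Set (Fin d → ℝ)) (_ : S ∈ 𝒮) (J : Finset (Fin N)) (_ : J.Nonempty),
    max (μ (⋂ j ∈ J, {ω | X j ω ∈ S}) / ∏ j ∈ J, μ {ω | X j ω ∈ S})
        (μ (⋂ j ∈ J, {ω | X j ω ∉ S}) / ∏ j ∈ J, μ {ω | X j ω ∉ S})

instance (N : ℕ) : MeasurableSpace (Equiv.Perm (Fin N)) := ⊤

instance (N : ℕ) : Nonempty (Equiv.Perm (Fin N)) := ⟨Equiv.refl _⟩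

/-- Value types of the sources of randomness of a Latin hypercube sample:
`d` random permutations and `N·d` random reals. -/
def lhsβ (d N : ℕ) : (Fin d ⊕ (Fin N × Fin d)) → Type :=
  fun i => Sum.elim (fun _ => Equiv.Perm (Fin N)) (fun _ => ℝ) i

noncomputable def lhsMS (d N : ℕ) : (i : Fin d ⊕ (Fin N × Fin d)) → MeasurableSpace (lhsβ d N i) :=
  fun i => match i with
  | .inl _ => ⊤
  | .inr _ => inferInstanceAs (MeasurableSpace ℝ)

def lhsFun {Ω : Type*} {d N : ℕ} (π : Fin d → Ω → Equiv.Perm (Fin N))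
    (U : Fin N → Ω → Fin d → ℝ) : (i : Fin d ⊕ (Fin N × Fin d)) → Ω → lhsβ d N i :=
  fun i => match i with
  | .inl j => π j
  | .inr p => fun ω => U p.1 ω p.2

/-- `X` is a Latin hypercube sample of `N` points in `[0,1)^d`, built from the
uniformly distributed random permutations `π_j` and the uniformly distributed
random variables `U_{n,j}`, all mutually independent. -/
def IsLHS {Ω : Type*} [MeasurableSpace Ω] (μ : Measure Ω) (d N : ℕ)
    (X : Fin N → Ω → Fin d → ℝ)
    (π : Fin d → Ω → Equiv.Perm (Fin N)) (U : Fin N → Ω → Fin d → ℝ) : Prop :=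
  (∀ j, Measure.map (π j) μ = (PMF.uniformOfFintype (Equiv.Perm (Fin N))).toMeasure) ∧
  (∀ n j, Measure.map (fun ω => U n ω j) μ = volume.restrict (Set.Ico (0 : ℝ) 1)) ∧
  iIndepFun (m := lhsMS d N) (lhsFun π U) μ ∧
  (∀ n j ω, X n ω j = (((π j ω) n : ℕ) + U n ω j) / N)

/-- An elementary interval in base `b` of order `k` in `[0,1)^d`. -/
def IsElemInterval (b d k : ℕ) (E : Set (Fin d → ℝ)) : Prop :=
  ∃ ℓ : Fin d → ℕ, ∃ a : Fin d → ℕ, (∀ i, a i < b ^ ℓ i) ∧ (∑ i, ℓ i = k) ∧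
    E = {x | ∀ i, x i ∈ Set.Ico ((a i : ℝ) / b ^ ℓ i) (((a i : ℝ) + 1) / b ^ ℓ i)}

/-- A `(t,m,d)`-net in base `b`: `b^m` points in `[0,1)^d` such that every elementary
interval of order `m - t` contains exactly `b^t` points (with multiplicity). -/
def IsNet (b d m t : ℕ) (P : Fin (b ^ m) → Fin d → ℝ) : Prop :=
  (∀ n, P n ∈ unitCube d) ∧
  ∀ E : Set (Fin d → ℝ), IsElemInterval b d (m - t) E →
    (Finset.univ.filter fun n => P n ∈ E).card = b ^ t

/-- A `b`-ary scrambling of depth `ℓ`: a self-map of `[0,1)` mapping, for each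
`k ∈ {1,…,ℓ}`, elementary intervals of order `k` into elementary intervals of order `k`,
distinct ones into distinct ones. -/
def IsScrambling (b ℓ : ℕ) (σ : ℝ → ℝ) : Prop :=
  (∀ x ∈ Set.Ico (0 : ℝ) 1, σ x ∈ Set.Ico (0 : ℝ) 1) ∧
  ∀ k, 1 ≤ k → k ≤ ℓ → ∃ f : ℕ → ℕ,
    (∀ a < b ^ k, f a < b ^ k) ∧
    (∀ a < b ^ k, ∀ a' < b ^ k, a ≠ a' → f a ≠ f a') ∧
    (∀ a < b ^ k, ∀ x ∈ Set.Ico ((a : ℝ) / b ^ k) (((a : ℝ) + 1) / b ^ k),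
      σ x ∈ Set.Ico ((f a : ℝ) / b ^ k) (((f a : ℝ) + 1) / b ^ k))

/-- A basic cube of an abstract scrambled `(t,m,d)`-net in base `b`. -/
def IsBasicCube (b d m t : ℕ) (C : Set (Fin d → ℝ)) : Prop :=
  ∃ k : Fin d → ℕ, (∀ j, k j < b ^ (m - t)) ∧
    C = {x | ∀ j, x j ∈ Set.Ico ((k j : ℝ) / b ^ (m - t)) (((k j : ℝ) + 1) / b ^ (m - t))}

/-- An abstract scrambled `(t,m,d)`-net in base `b`. -/
def IsAbstractScrambledNet {Ω : Type*} [MeasurableSpace Ω] (μ : Measure Ω)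
    (b d m t : ℕ) (Y : Fin (b ^ m) → Ω → (Fin d → ℝ)) : Prop :=
  (∀ᵐ ω ∂μ, IsNet b d m t fun n => Y n ω) ∧
  (∀ i C, IsBasicCube b d m t C → μ {ω | Y i ω ∈ C} = ((b : ℝ≥0∞) ^ (d * (m - t)))⁻¹) ∧
  (∀ M : Set (Fin d → ℝ), MeasurableSet M →
    ∀ J : Finset (Fin (b ^ m)), J.Nonempty →
    ∀ C : Fin (b ^ m) → Set (Fin d → ℝ), (∀ j ∈ J, IsBasicCube b d m t (C j)) →
      μ (⋂ j ∈ J, {ω | Y j ω ∈ C j}) ≠ 0 →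
      (μ[|⋂ j ∈ J, {ω | Y j ω ∈ C j}]) (⋂ j ∈ J, {ω | Y j ω ∈ M}) =
        ∏ j ∈ J, volume (M ∩ C j) / volume (C j))

/-!
Take `S = [0, (d-1+t)/d)^d \ [0, (d-1)/d)^d`. A point `X_n` of the sample lies in `S` exactly
when some coordinate of `X_n` falls in the top stratum and every such coordinate has offset
`U_{n,j} < t`. All `d` points lie in `S` as soon as the top strata of the `d` coordinates are
occupied by `d` distinct points, each with offset below `t`; these events, one for each
permutation, are disjoint and have probability `(t/d)^d`, so `P(∀ n, X_n ∈ S) ≥ d! (t/d)^d`.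
A union bound over the coordinate that lies in the top stratum gives
`P(X_n ∈ S) ≤ t ((d-1+t)/d)^(d-1)`. Hence `γ ≥ d! / (d^d ((d-1+t)/d)^(d(d-1)))`, and for
`t = 1/d²` Stirling's formula together with `-log (1 - x) ≥ x + x²/2` shows that this is at
least `√d · √(2π/e) · (1 + o(1))`.
-/

open Set Function Topology
open scoped Nat

lemma card_perm_apply_eq_mul_card {α : Type*} [Fintype α] [DecidableEq α] (a b : α) :
    Fintype.card {p : Equiv.Perm α // p a = b} * Fintype.card α = (Fintype.card α)! := by
  have hfiber (c : α) :
      Fintype.card {p : Equiv.Perm α // p a = c} = Fintype.card {p : Equiv.Perm α // p a = b} :=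
    Fintype.card_congr <| (Equiv.mulLeft (Equiv.swap c b)).subtypeEquiv fun p => by
      simp [Equiv.swap_apply_eq_iff]
  calc Fintype.card {p : Equiv.Perm α // p a = b} * Fintype.card α
      = ∑ c : α, Fintype.card {p : Equiv.Perm α // p a = c} := by simp [hfiber, mul_comm]
    _ = Fintype.card (Equiv.Perm α) := Fintype.card_sigma.symm.trans <|
        Fintype.card_congr (Equiv.sigmaFiberEquiv fun p : Equiv.Perm α => p a)
    _ = (Fintype.card α)! := Fintype.card_perm

lemma uniformOfFintype_toMeasure_perm_apply_eq {N : ℕ} (a b : Fin N) :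
    (PMF.uniformOfFintype (Equiv.Perm (Fin N))).toMeasure {p | p a = b} = (N : ℝ≥0∞)⁻¹ := by
  have hcard := card_perm_apply_eq_mul_card a b
  rw [Fintype.card_fin] at hcard
  have hc : (Fintype.card {p : Equiv.Perm (Fin N) // p a = b} : ℝ≥0∞) ≠ 0 := by
    rintro h0
    rw [Nat.cast_eq_zero.1 h0, zero_mul] at hcard
    exact N.factorial_ne_zero hcard.symm
  rw [PMF.toMeasure_uniformOfFintype_apply _ MeasurableSpace.measurableSet_top,
    Fintype.card_perm, Fintype.card_fin]
  change (Fintype.card {p : Equiv.Perm (Fin N) // p a = b} : ℝ≥0∞) / (N ! : ℕ) = _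
  rw [← hcard, Nat.cast_mul]
  simpa using ENNReal.mul_div_mul_left 1 (N : ℝ≥0∞) hc (ENNReal.natCast_ne_top _)

lemma volume_Iio_inter_Ico {t : ℝ} (ht : t ≤ 1) :
    volume (Iio t ∩ Ico 0 1) = ENNReal.ofReal t := by
  rw [inter_comm, Ico_inter_Iio, min_eq_right ht, Real.volume_Ico, sub_zero]

lemma sum_ite_div_eq {N : ℕ} (l : Fin N) (t : ℝ) :
    ∑ k : Fin N, (if k = l then t else 1) / N = ((N : ℝ) - 1 + t) / N := by
  rw [← Finset.sum_div]
  congr 1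
  simp [Finset.sum_ite, Finset.filter_ne', Finset.filter_eq', Nat.cast_sub l.pos]
  ring

lemma sum_piFinset_prod_ofReal {d N : ℕ} (j : Fin d) (l : Fin N) {w : Fin N → ℝ}
    (hw : ∀ k, 0 ≤ w k) :
    ∑ v ∈ Fintype.piFinset (fun i => if i = j then {l} else Finset.univ),
        ∏ i, ENNReal.ofReal (w (v i)) = ENNReal.ofReal (w l * (∑ k, w k) ^ (d - 1)) := by
  have hfactor (i : Fin d) : ∑ k ∈ (if i = j then {l} else Finset.univ), ENNReal.ofReal (w k) =
      if i = j then ENNReal.ofReal (w l) else ENNReal.ofReal (∑ k, w k) := by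
    split_ifs
    · simp
    · rw [ENNReal.ofReal_sum_of_nonneg fun k _ => hw k]
  rw [← Finset.prod_univ_sum (f := fun _ k => ENNReal.ofReal (w k)),
    Finset.prod_congr rfl fun i _ => hfactor i, ENNReal.ofReal_mul (hw l),
    ENNReal.ofReal_pow (Finset.sum_nonneg fun k _ => hw k)]
  simp [Finset.prod_ite, Finset.filter_ne', Finset.filter_eq']

lemma natCast_add_lt_natCast_add_iff {k l : ℕ} (hkl : k ≤ l) {u s : ℝ} (hu : u ∈ Ico (0 : ℝ) 1)
    (hs : 0 ≤ s) : (k : ℝ) + u < l + s ↔ (k = l → u < s) := by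
  rcases hkl.lt_or_eq with hlt | rfl
  · have : (k : ℝ) + 1 ≤ l := by exact_mod_cast hlt
    simp only [hlt.ne, false_imp_iff, iff_true]
    linarith [hu.2]
  · simp

def topShell (d N : ℕ) (t : ℝ) : Set (Fin d → ℝ) :=
  anchoredBox (fun _ => ((N : ℝ) - 1 + t) / N) \ anchoredBox (fun _ => ((N : ℝ) - 1) / N)

lemma topShell_mem_boxDiffs {d N : ℕ} (hN : 0 < N) {t : ℝ} (ht0 : 0 ≤ t) (ht1 : t ≤ 1) :
    topShell d N t ∈ boxDiffs d := by
  have hN1 : (1 : ℝ) ≤ N := by exact_mod_cast hN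
  have hmem {s : ℝ} (hs0 : 0 ≤ s) (hs1 : s ≤ 1) : ((N : ℝ) - 1 + s) / N ∈ Icc (0 : ℝ) 1 :=
    ⟨by positivity, by rw [div_le_one (by positivity)]; linarith⟩
  exact ⟨_, ⟨_, fun _ => by simpa using hmem le_rfl zero_le_one, rfl⟩,
    _, ⟨_, fun _ => hmem ht0 ht1, rfl⟩, rfl⟩

section

variable {d N : ℕ} {l : Fin N} {t : ℝ}

lemma natCast_add_div_lt_iff (hl : (l : ℕ) + 1 = N) {s : ℝ} (hs : 0 ≤ s) (k : Fin N) {u : ℝ}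
    (hu : u ∈ Ico (0 : ℝ) 1) :
    (((k : ℕ) : ℝ) + u) / N < ((N : ℝ) - 1 + s) / N ↔ (k = l → u < s) := by
  have hN : (0 : ℝ) < N := by rw [← hl]; positivity
  have hNl : (N : ℝ) - 1 = (l : ℕ) := by
    have : ((l : ℕ) : ℝ) + 1 = N := by exact_mod_cast hl
    linarith
  rw [div_lt_div_iff_of_pos_right hN, hNl, natCast_add_lt_natCast_add_iff (by omega) hu hs,
    Fin.val_inj]

lemma mem_topShell_iff (hl : (l : ℕ) + 1 = N) (ht : 0 ≤ t) {k : Fin d → Fin N} {u : Fin d → ℝ}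
    (hu : ∀ j, u j ∈ Ico (0 : ℝ) 1) :
    (fun j => (((k j : ℕ) : ℝ) + u j) / N) ∈ topShell d N t ↔
      (∃ j, k j = l) ∧ ∀ j, k j = l → u j < t := by
  have hnonneg (j : Fin d) : 0 ≤ (((k j : ℕ) : ℝ) + u j) / N := by
    have := (hu j).1; positivity
  have hlow (j : Fin d) : (((k j : ℕ) : ℝ) + u j) / N < ((N : ℝ) - 1) / N ↔ k j ≠ l := by
    simpa [not_lt.2 (hu j).1] using natCast_add_div_lt_iff hl le_rfl (k j) (hu j)
  simp only [topShell, anchoredBox, Set.mem_sdiff, mem_ofPred_eq, mem_Ico, hnonneg, true_and,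
    natCast_add_div_lt_iff hl ht _ (hu _), hlow, not_forall, not_not]
  tauto

end

def stratumEvent {Ω : Type*} {d N : ℕ} (π : Fin d → Ω → Equiv.Perm (Fin N))
    (U : Fin N → Ω → Fin d → ℝ) (a b : Fin d → Fin N) (T : Fin d → Set ℝ) : Set Ω :=
  ⋂ j, {ω | π j ω (a j) = b j ∧ U (a j) ω j ∈ T j}

namespace IsLHS

variable {Ω : Type*} [MeasurableSpace Ω] {μ : Measure Ω} {d N : ℕ} {X : Fin N → Ω → Fin d → ℝ}
  {π : Fin d → Ω → Equiv.Perm (Fin N)} {U : Fin N → Ω → Fin d → ℝ} {l : Fin N} {t : ℝ}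

lemma aemeasurable_perm (h : IsLHS μ d N X π U) (j : Fin d) : AEMeasurable (π j) μ :=
  .of_map_ne_zero <| by rw [h.1 j]; exact IsProbabilityMeasure.ne_zero _

lemma aemeasurable_unif (h : IsLHS μ d N X π U) (n : Fin N) (j : Fin d) :
    AEMeasurable (fun ω => U n ω j) μ :=
  .of_map_ne_zero <| by rw [h.2.1 n j]; simp

lemma measure_perm_apply_eq (h : IsLHS μ d N X π U) (j : Fin d) (a b : Fin N) :
    μ {ω | π j ω a = b} = (N : ℝ≥0∞)⁻¹ := by
  rw [← uniformOfFintype_toMeasure_perm_apply_eq a b, ← h.1 j,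
    Measure.map_apply_of_aemeasurable (h.aemeasurable_perm j) MeasurableSpace.measurableSet_top]
  rfl

lemma measure_unif_mem (h : IsLHS μ d N X π U) (n : Fin N) (j : Fin d) {T : Set ℝ}
    (hT : MeasurableSet T) : μ {ω | U n ω j ∈ T} = volume (T ∩ Ico 0 1) := by
  rw [← Measure.restrict_apply hT, ← h.2.1 n j,
    Measure.map_apply_of_aemeasurable (h.aemeasurable_unif n j) hT]
  rfl

lemma ae_unif_mem_Ico (h : IsLHS μ d N X π U) : ∀ᵐ ω ∂μ, ∀ n j, U n ω j ∈ Ico (0 : ℝ) 1 := by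
  simp only [ae_all_iff]
  intro n j
  refine ae_of_ae_map (h.aemeasurable_unif n j) ?_
  rw [h.2.1 n j]
  exact ae_restrict_mem measurableSet_Ico

lemma nullMeasurableSet_stratumEvent (h : IsLHS μ d N X π U) (a b : Fin d → Fin N)
    {T : Fin d → Set ℝ} (hT : ∀ j, MeasurableSet (T j)) :
    NullMeasurableSet (stratumEvent π U a b T) μ :=
  .iInter fun j => ((h.aemeasurable_perm j).nullMeasurable (s := {p | p (a j) = b j})
    MeasurableSpace.measurableSet_top).inter ((h.aemeasurable_unif (a j) j).nullMeasurable (hT j))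

lemma mem_topShell_iff_of_mem_Ico (h : IsLHS μ d N X π U) (hl : (l : ℕ) + 1 = N) (ht : 0 ≤ t)
    {n : Fin N} {ω : Ω} (hU : ∀ j, U n ω j ∈ Ico (0 : ℝ) 1) :
    X n ω ∈ topShell d N t ↔ (∃ j, π j ω n = l) ∧ ∀ j, π j ω n = l → U n ω j < t := by
  rw [show X n ω = fun j => ((((π j ω) n : ℕ) : ℝ) + U n ω j) / N from funext (h.2.2.2 n · ω)]
  exact mem_topShell_iff hl ht hU

variable [IsProbabilityMeasure μ]

lemma measure_stratumEvent (h : IsLHS μ d N X π U) (a b : Fin d → Fin N) {T : Fin d → Set ℝ}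
    (hT : ∀ j, MeasurableSet (T j)) :
    μ (stratumEvent π U a b T) = ∏ j, volume (T j ∩ Ico 0 1) / N := by
  -- Independence is used for the whole family; offsets of points other than `a j` are free.
  let s : Fin d ⊕ (Fin N × Fin d) → Set Ω := Sum.elim (fun j => {ω | π j ω (a j) = b j})
    (fun p => {ω | p.1 = a p.2 → U p.1 ω p.2 ∈ T p.2})
  have hs (i) : MeasurableSet[(lhsMS d N i).comap (lhsFun π U i)] (s i) := by
    rcases i with j | ⟨n, j⟩
    · exact ⟨({p | p (a j) = b j} : Set (Equiv.Perm (Fin N))), trivial, rfl⟩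
    · exact ⟨{x | n = a j → x ∈ T j}, (MeasurableSet.const _).imp (hT j), rfl⟩
  have hinter : stratumEvent π U a b T = ⋂ i, s i := by
    ext ω
    simp [stratumEvent, s, Set.iInter_sum, forall_and, forall_comm (α := Fin N)]
  have hunif (j : Fin d) : ∏ n, μ (s (.inr (n, j))) = volume (T j ∩ Ico 0 1) := by
    rw [Fintype.prod_eq_single (a j) fun n hn => by simp [s, hn]]
    simpa [s] using h.measure_unif_mem (a j) j (hT j)
  rw [hinter, h.2.2.1.meas_iInter hs, Fintype.prod_sum_type, Fintype.prod_prod_type_right]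
  simp only [hunif, ← Finset.prod_mul_distrib, ENNReal.div_eq_inv_mul]
  congr! 2 with j
  exact h.measure_perm_apply_eq j (a j) (b j)

lemma measure_stratumEvent_Iio (h : IsLHS μ d N X π U) (a b : Fin d → Fin N) (ht : t ≤ 1) :
    μ (stratumEvent π U a b fun _ => Iio t) = (ENNReal.ofReal t / N) ^ d := by
  rw [h.measure_stratumEvent a b fun _ => measurableSet_Iio, volume_Iio_inter_Ico ht,
    Finset.prod_const, Finset.card_univ, Fintype.card_fin]

lemma measure_mem_topShell_le (h : IsLHS μ d N X π U) (hl : (l : ℕ) + 1 = N) (ht0 : 0 ≤ t)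
    (ht1 : t ≤ 1) (n : Fin N) :
    μ {ω | X n ω ∈ topShell d N t} ≤
      ENNReal.ofReal (d * (t / N) * (((N : ℝ) - 1 + t) / N) ^ (d - 1)) := by
  have hN : (0 : ℝ) < N := by rw [← hl]; positivity
  let T (k : Fin N) : Set ℝ := if k = l then Iio t else univ
  let w (k : Fin N) : ℝ := (if k = l then t else 1) / N
  let V (j : Fin d) : Finset (Fin d → Fin N) :=
    Fintype.piFinset fun i => if i = j then {l} else Finset.univ
  let E (v : Fin d → Fin N) := stratumEvent π U (fun _ => n) v (T ∘ v)
  have hw (k : Fin N) : 0 ≤ w k := div_nonneg (by split_ifs <;> linarith) hN.le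
  -- `v i` is the stratum of the `i`-th coordinate of `X n`, and `j` a coordinate in the top one.
  have hsub : {ω | X n ω ∈ topShell d N t} ≤ᵐ[μ] ⋃ j, ⋃ v ∈ V j, E v := by
    filter_upwards [h.ae_unif_mem_Ico] with ω hU hω
    obtain ⟨⟨j, hj⟩, hlt⟩ := (h.mem_topShell_iff_of_mem_Ico hl ht0 (hU n)).1 hω
    refine mem_iUnion.2 ⟨j, mem_iUnion₂.2 ⟨fun i => π i ω n, ?_, ?_⟩⟩
    · refine Fintype.mem_piFinset.2 fun i => ?_
      split_ifs with hi
      · simpa [hi] using hj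
      · exact Finset.mem_univ _
    · simp only [E, stratumEvent, mem_iInter, mem_ofPred_eq, comp_apply, true_and]
      intro i
      by_cases hi : π i ω n = l <;> simp [T, hi, hlt]
  have hE (v : Fin d → Fin N) : μ (E v) = ∏ i, ENNReal.ofReal (w (v i)) := by
    rw [h.measure_stratumEvent _ _ fun i => by by_cases hi : v i = l <;> simp [T, hi]]
    refine Finset.prod_congr rfl fun i _ => ?_
    by_cases hi : v i = l
    · simp [T, w, hi, volume_Iio_inter_Ico ht1, ENNReal.ofReal_div_of_pos hN]
    · simp [T, w, hi, ENNReal.ofReal_inv_of_pos hN]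
  have hV (j : Fin d) : ∑ v ∈ V j, ∏ i, ENNReal.ofReal (w (v i)) =
      ENNReal.ofReal (t / N * (((N : ℝ) - 1 + t) / N) ^ (d - 1)) := by
    rw [sum_piFinset_prod_ofReal j l hw, sum_ite_div_eq]
    simp [w]
  calc μ {ω | X n ω ∈ topShell d N t} ≤ μ (⋃ j, ⋃ v ∈ V j, E v) := measure_mono_ae hsub
    _ ≤ ∑ j, ∑ v ∈ V j, μ (E v) := (measure_iUnion_fintype_le _ _).trans
        (Finset.sum_le_sum fun j _ => measure_biUnion_finset_le _ _)
    _ = ENNReal.ofReal (d * (t / N) * (((N : ℝ) - 1 + t) / N) ^ (d - 1)) := by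
        simp only [hE, hV, Finset.sum_const, Finset.card_univ, Fintype.card_fin, nsmul_eq_mul]
        rw [mul_assoc, ENNReal.ofReal_mul (Nat.cast_nonneg _), ENNReal.ofReal_natCast]

end IsLHS

noncomputable def topShellBound (d : ℕ) (t : ℝ) : ℝ :=
  d ! / (d ^ d * (((d : ℝ) - 1 + t) / d) ^ (d * (d - 1)))

namespace IsLHS

variable {Ω : Type*} [MeasurableSpace Ω] {μ : Measure Ω} [IsProbabilityMeasure μ] {d : ℕ}
  {X : Fin d → Ω → Fin d → ℝ} {π : Fin d → Ω → Equiv.Perm (Fin d)} {U : Fin d → Ω → Fin d → ℝ}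
  {l : Fin d} {t : ℝ}

lemma ofReal_le_measure_forall_mem_topShell (h : IsLHS μ d d X π U) (hl : (l : ℕ) + 1 = d)
    (ht0 : 0 ≤ t) (ht1 : t ≤ 1) :
    ENNReal.ofReal (d ! * (t / d) ^ d) ≤ μ (⋂ n, {ω | X n ω ∈ topShell d d t}) := by
  let E (σ : Equiv.Perm (Fin d)) := stratumEvent π U σ (fun _ => l) fun _ => Iio t
  have hdisj : Pairwise (Disjoint on E) := by
    intro σ τ hστ
    refine Set.disjoint_left.2 fun ω hσ hτ => hστ <| Equiv.ext fun j => (π j ω).injective ?_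
    simp only [E, stratumEvent, mem_iInter, mem_ofPred_eq] at hσ hτ
    exact (hσ j).1.trans (hτ j).1.symm
  have hsub : (⋃ σ, E σ : Set Ω) ≤ᵐ[μ] ⋂ n, {ω | X n ω ∈ topShell d d t} := by
    filter_upwards [h.ae_unif_mem_Ico] with ω hU hω
    obtain ⟨σ, hσ⟩ := mem_iUnion.1 hω
    simp only [E, stratumEvent, mem_iInter, mem_ofPred_eq, mem_Iio] at hσ
    refine mem_iInter.2 fun n => (h.mem_topShell_iff_of_mem_Ico hl ht0 (hU n)).2
      ⟨⟨σ.symm n, by simpa using (hσ (σ.symm n)).1⟩, fun j hj => ?_⟩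
    obtain rfl : σ j = n := (π j ω).injective ((hσ j).1.trans hj.symm)
    exact (hσ j).2
  have hd : (0 : ℝ) < d := by rw [← hl]; positivity
  calc ENNReal.ofReal (d ! * (t / d) ^ d) = d ! * (ENNReal.ofReal t / d) ^ d := by
        rw [ENNReal.ofReal_mul (by positivity), ENNReal.ofReal_pow (by positivity),
          ENNReal.ofReal_div_of_pos hd, ENNReal.ofReal_natCast, ENNReal.ofReal_natCast]
    _ = ∑ σ, μ (E σ) := by simp [E, h.measure_stratumEvent_Iio _ _ ht1, Fintype.card_perm]
    _ = μ (⋃ σ, E σ) := by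
        rw [measure_iUnion₀ (hdisj.mono fun _ _ => Disjoint.aedisjoint)
          fun σ => h.nullMeasurableSet_stratumEvent _ _ fun _ => measurableSet_Iio, tsum_fintype]
    _ ≤ μ (⋂ n, {ω | X n ω ∈ topShell d d t}) := measure_mono_ae hsub

lemma ofReal_topShellBound_le_corrNum (h : IsLHS μ d d X π U) (hd : 0 < d) (ht0 : 0 < t)
    (ht1 : t ≤ 1) : ENNReal.ofReal (topShellBound d t) ≤ corrNum μ (boxDiffs d) X := by
  let l : Fin d := ⟨d - 1, by omega⟩
  have hl : (l : ℕ) + 1 = d := by simp [l]; omega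
  have hd' : (0 : ℝ) < d := by exact_mod_cast hd
  have hp : 0 < ((d : ℝ) - 1 + t) / d :=
    div_pos (by linarith [show (1 : ℝ) ≤ d by exact_mod_cast hd]) hd'
  have hratio : topShellBound d t =
      d ! * (t / d) ^ d / (t * (((d : ℝ) - 1 + t) / d) ^ (d - 1)) ^ d := by
    rw [topShellBound, mul_comm d (d - 1), pow_mul, div_pow t, mul_pow]
    field_simp
  have hden : ∏ n ∈ Finset.univ, μ {ω | X n ω ∈ topShell d d t} ≤
      ENNReal.ofReal ((t * (((d : ℝ) - 1 + t) / d) ^ (d - 1)) ^ d) := by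
    refine (Finset.prod_le_prod' fun n _ => h.measure_mem_topShell_le hl ht0.le ht1 n).trans_eq ?_
    rw [mul_div_cancel₀ t hd'.ne', ENNReal.ofReal_pow (by positivity)]
    simp
  calc ENNReal.ofReal (topShellBound d t)
      = ENNReal.ofReal (d ! * (t / d) ^ d) /
          ENNReal.ofReal ((t * (((d : ℝ) - 1 + t) / d) ^ (d - 1)) ^ d) := by
        rw [hratio, ENNReal.ofReal_div_of_pos (by positivity)]
    _ ≤ μ (⋂ n ∈ Finset.univ, {ω | X n ω ∈ topShell d d t}) /
          ∏ n ∈ Finset.univ, μ {ω | X n ω ∈ topShell d d t} :=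
        ENNReal.div_le_div (by simpa using h.ofReal_le_measure_forall_mem_topShell hl ht0.le ht1)
          hden
    _ ≤ corrNum μ (boxDiffs d) X :=
        le_iSup_of_le (topShell d d t) <| le_iSup_of_le (topShell_mem_boxDiffs hd ht0.le ht1) <|
          le_iSup_of_le Finset.univ <| le_iSup_of_le ⟨⟨0, hd⟩, Finset.mem_univ _⟩ <|
            le_max_left _ _

end IsLHS

lemma add_sq_div_two_le_neg_log_one_sub {x : ℝ} (hx0 : 0 ≤ x) (hx1 : x < 1) :
    x + x ^ 2 / 2 ≤ -Real.log (1 - x) := by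
  have hseries := Real.hasSum_pow_div_log_of_abs_lt_one (by rwa [abs_of_nonneg hx0])
  simpa [Finset.sum_range_succ, one_add_one_eq_two] using
    sum_le_hasSum (Finset.range 2) (fun i _ => by positivity) hseries

lemma one_sub_pow_le_exp {x : ℝ} (hx0 : 0 ≤ x) (hx1 : x < 1) (m : ℕ) :
    (1 - x) ^ m ≤ Real.exp (-(m * (x + x ^ 2 / 2))) := by
  rw [← Real.exp_log (pow_pos (sub_pos.2 hx1) m), Real.log_pow, Real.exp_le_exp, ← mul_neg]
  exact mul_le_mul_of_nonneg_left (le_neg.1 (add_sq_div_two_le_neg_log_one_sub hx0 hx1))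
    m.cast_nonneg

/-- With `x = (1 - t) / d`, so that `(d - 1 + t) / d = 1 - x`, this is `d - d (d - 1) (x + x²/2)`:
the exponent left after bounding `(1 - x) ^ (d (d - 1))` by `-log (1 - x) ≥ x + x²/2`. -/
noncomputable def shellExponent (d : ℕ) (t : ℝ) : ℝ :=
  d - d * (d - 1) * ((1 - t) / d + ((1 - t) / d) ^ 2 / 2)

lemma stirlingSeq_mul_exp_le_topShellBound {d : ℕ} (hd : 0 < d) {t : ℝ} (ht0 : 0 < t)
    (ht1 : t ≤ 1) :
    Stirling.stirlingSeq d * √2 * Real.exp (-shellExponent d t) ≤ topShellBound d t / √d := by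
  have hd' : (0 : ℝ) < d := by exact_mod_cast hd
  set x := (1 - t) / d with hx
  have hx0 : 0 ≤ x := div_nonneg (by linarith) hd'.le
  have hx1 : x < 1 := by
    rw [hx, div_lt_one hd']
    linarith [show (1 : ℝ) ≤ d by exact_mod_cast hd]
  have hp : ((d : ℝ) - 1 + t) / d = 1 - x := by
    rw [hx]
    field_simp
    ring
  have hm : ((d * (d - 1) : ℕ) : ℝ) = d * (d - 1) := by
    rw [Nat.cast_mul, Nat.cast_sub hd, Nat.cast_one]
  have hpow := one_sub_pow_le_exp hx0 hx1 (d * (d - 1))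
  rw [hm] at hpow
  have hstirling : Stirling.stirlingSeq d * √2 * Real.exp (-shellExponent d t) =
      d ! / (d ^ d * Real.exp (-(d * (d - 1) * (x + x ^ 2 / 2)))) / √d := by
    rw [Stirling.stirlingSeq, shellExponent, ← hx, Real.sqrt_mul (by norm_num), div_pow,
      Real.exp_one_pow, neg_sub, Real.exp_sub, Real.exp_neg]
    field_simp
  rw [hstirling, topShellBound, hp]
  gcongr

lemma tendsto_shellExponent :
    Tendsto (fun d : ℕ => shellExponent d ((d : ℝ) ^ 2)⁻¹) atTop (𝓝 (1 / 2)) := by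
  let P (v : ℝ) : ℝ := 1 + v - v ^ 2 - (1 - v) * (1 - v ^ 2) ^ 2 / 2
  have hP : Tendsto (fun d : ℕ => P (d : ℝ)⁻¹) atTop (𝓝 (1 / 2)) := by
    have hP0 : P 0 = 1 / 2 := by norm_num [P]
    exact hP0 ▸ ((by fun_prop : Continuous P).tendsto 0).comp tendsto_inv_atTop_nhds_zero_nat
  refine hP.congr' ((eventually_gt_atTop 0).mono fun d hd => ?_)
  have hd' : (d : ℝ) ≠ 0 := by positivity
  simp only [P, shellExponent]
  field_simp
  ring

lemma tendsto_stirlingSeq_mul_exp_shellExponent :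
    Tendsto (fun d : ℕ => Stirling.stirlingSeq d * √2 * Real.exp (-shellExponent d ((d : ℝ) ^ 2)⁻¹))
      atTop (𝓝 √(2 * Real.pi / Real.exp 1)) := by
  have hlim : √Real.pi * √2 * Real.exp (-(1 / 2)) = √(2 * Real.pi / Real.exp 1) := by
    rw [Real.sqrt_div (by positivity), Real.sqrt_mul zero_le_two, Real.sqrt_eq_rpow (Real.exp 1),
      Real.exp_one_rpow, Real.exp_neg, div_eq_mul_inv]
    ring
  rw [← hlim]
  exact (Stirling.tendsto_stirlingSeq_sqrt_pi.mul_const _).mul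
    ((Real.continuous_exp.tendsto _).comp tendsto_shellExponent.neg)

/-- For Latin hypercube samples `X^{(d)}` of `N = d` points in `[0,1)^d`,
`liminf_{d→∞} γ_{D^d_0}(X^{(d)}) / √d ≥ √(2π/e)`. -/
theorem stmt1 (Ω : ℕ → Type) (mΩ : ∀ d, MeasurableSpace (Ω d))
    (μ : ∀ d, Measure (Ω d)) (hprob : ∀ d, IsProbabilityMeasure (μ d))
    (X : ∀ d, Fin d → Ω d → Fin d → ℝ)
    (π : ∀ d, Fin d → Ω d → Equiv.Perm (Fin d))
    (U : ∀ d, Fin d → Ω d → Fin d → ℝ)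
    (h : ∀ d, 2 ≤ d → IsLHS (μ d) d d (X d) (π d) (U d)) :
    ENNReal.ofReal (Real.sqrt (2 * Real.pi / Real.exp 1)) ≤
      Filter.liminf
        (fun d : ℕ => corrNum (μ d) (boxDiffs d) (X d) / ENNReal.ofReal (Real.sqrt d))
        Filter.atTop := by
  rw [← (ENNReal.tendsto_ofReal tendsto_stirlingSeq_mul_exp_shellExponent).liminf_eq]
  refine liminf_le_liminf <| (eventually_ge_atTop 2).mono fun d hd => ?_
  have hd0 : 0 < d := by omega
  have ht0 : 0 < ((d : ℝ) ^ 2)⁻¹ := by positivity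
  have ht1 : ((d : ℝ) ^ 2)⁻¹ ≤ 1 := inv_le_one_of_one_le₀ (one_le_pow₀ (by exact_mod_cast hd0))
  calc ENNReal.ofReal (Stirling.stirlingSeq d * √2 * Real.exp (-shellExponent d ((d : ℝ) ^ 2)⁻¹))
      ≤ ENNReal.ofReal (topShellBound d ((d : ℝ) ^ 2)⁻¹ / √d) :=
        ENNReal.ofReal_le_ofReal (stirlingSeq_mul_exp_le_topShellBound hd0 ht0 ht1)
    _ = ENNReal.ofReal (topShellBound d ((d : ℝ) ^ 2)⁻¹) / ENNReal.ofReal √d :=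
        ENNReal.ofReal_div_of_pos (by positivity)
    _ ≤ corrNum (μ d) (boxDiffs d) (X d) / ENNReal.ofReal √d := by
        have := hprob d
        gcongr
        exact (h d hd).ofReal_topShellBound_le_corrNum hd0 ht0 ht1

end LHSPaper
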